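/- arXiv:math/0107138 — 4 statements merged into one kernel-verified Lean document; each statement's English description precedes it below -/
import Mathlib

section
/- The 4-dimensional representation ζ₄ of the braid group B₃ is simple: every K-linear subspace V of K⁴ satisfying R₄·v ∈ V and Q₄·v ∈ V for all v ∈ V is either the zero subspace or all of K⁴. -/
noncomputable section

/-- The variable `W` of the field `K = ℂ(W)` of rational functions over `ℂ`. -/
def W : RatFunc ℂ := RatFunc.X

/-- `R₄`: the 4×4 block of the image of the elementary braid `σ₁` of `B₃` under the
invariant `Z_spin7` obtained from the universal Vassiliev–Kontsevich invariant composed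
with the weight system of the spinor representation of `so₇`. -/
def R4 : Matrix (Fin 4) (Fin 4) (RatFunc ℂ) :=
  !![W ^ 21, -W * (1 - W ^ 4 + W ^ 8), -W ^ 9 * (1 - W ^ 4 + W ^ 8), W ^ (-3 : ℤ);
     0, -W, -(1 - W ^ 4) * W ^ 9, W ^ (-3 : ℤ);
     0, 0, -W ^ 9, W ^ (-3 : ℤ);
     0, 0, 0, W ^ (-3 : ℤ)]

/-- `Q₄`: the 4×4 block of the image of the elementary braid `σ₂` of `B₃` under
`Z_spin7`. -/
def Q4 : Matrix (Fin 4) (Fin 4) (RatFunc ℂ) :=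
  !![W ^ (-3 : ℤ), 0, 0, 0;
     W ^ 9, -W ^ 9, 0, 0;
     W ^ (-3 : ℤ), W ^ (-3 : ℤ) * (W ^ 4 - 1), -W, 0;
     W ^ 9, -W ^ 9 * (W ^ 8 - W ^ 4 + 1), -W ^ 13 * (W ^ 8 - W ^ 4 + 1), W ^ 21]


set_option synthInstance.maxHeartbeats 1000000
set_option maxHeartbeats 4000000

open Polynomial in
private lemma aevalW_ne (p : Polynomial ℂ) (h : p.eval 2 ≠ 0) :
    Polynomial.aeval W p ≠ 0 := by
  rw [show Polynomial.aeval W p = algebraMap (Polynomial ℂ) (RatFunc ℂ) p by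
    rw [W, ← RatFunc.algebraMap_X, aeval_algebraMap_apply, aeval_X_left_apply]]
  intro hh
  have hp : p = 0 := RatFunc.algebraMap_injective ℂ (by simpa using hh)
  simp [hp] at h

private lemma hW : W ≠ 0 := RatFunc.X_ne_zero

/-- `A = W^3 • R4`, with polynomial entries. -/
private def A : Matrix (Fin 4) (Fin 4) (RatFunc ℂ) :=
  !![W ^ 24, -W ^ 4 * (1 - W ^ 4 + W ^ 8), -W ^ 12 * (1 - W ^ 4 + W ^ 8), 1;
     0, -W ^ 4, -(1 - W ^ 4) * W ^ 12, 1;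
     0, 0, -W ^ 12, 1;
     0, 0, 0, 1]

/-- `B = W^3 • Q4`, with polynomial entries. -/
private def B : Matrix (Fin 4) (Fin 4) (RatFunc ℂ) :=
  !![1, 0, 0, 0;
     W ^ 12, -W ^ 12, 0, 0;
     1, W ^ 4 - 1, -W ^ 4, 0;
     W ^ 12, -W ^ 12 * (W ^ 8 - W ^ 4 + 1), -W ^ 16 * (W ^ 8 - W ^ 4 + 1), W ^ 24]

private lemma hkey : W ^ 3 * (W ^ 3)⁻¹ = 1 := mul_inv_cancel₀ (pow_ne_zero 3 hW)

private lemma A_mulVec (w : Fin 4 → RatFunc ℂ) : A.mulVec w = (W ^ 3) • R4.mulVec w := by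
  funext i
  fin_cases i <;>
    simp [A, R4, Matrix.mulVec, dotProduct, Fin.sum_univ_four, zpow_ofNat,
      zpow_natCast] <;>
    linear_combination (-(w 3)) * hkey

private lemma B_mulVec (w : Fin 4 → RatFunc ℂ) : B.mulVec w = (W ^ 3) • Q4.mulVec w := by
  funext i
  fin_cases i
  · simp [B, Q4, Matrix.mulVec, dotProduct, Fin.sum_univ_four, zpow_ofNat, zpow_natCast]
    linear_combination (-(w 0)) * hkey
  · simp [B, Q4, Matrix.mulVec, dotProduct, Fin.sum_univ_four, zpow_ofNat, zpow_natCast]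
    linear_combination (0 : RatFunc ℂ) * hkey
  · simp [B, Q4, Matrix.mulVec, dotProduct, Fin.sum_univ_four, zpow_ofNat, zpow_natCast]
    linear_combination (-(w 0) - (W ^ 4 - 1) * w 1) * hkey
  · simp [B, Q4, Matrix.mulVec, dotProduct, Fin.sum_univ_four, zpow_ofNat, zpow_natCast]
    linear_combination (0 : RatFunc ℂ) * hkey

private def st (a : RatFunc ℂ) (v : Fin 4 → RatFunc ℂ) : Fin 4 → RatFunc ℂ :=
  A.mulVec v - a • v

private lemma st_apply (a x0 x1 x2 x3 : RatFunc ℂ) :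
    st a ![x0, x1, x2, x3] =
      ![W ^ 24 * x0 - W ^ 4 * (1 - W ^ 4 + W ^ 8) * x1 - W ^ 12 * (1 - W ^ 4 + W ^ 8) * x2
          + x3 - a * x0,
        -W ^ 4 * x1 - (1 - W ^ 4) * W ^ 12 * x2 + x3 - a * x1,
        -W ^ 12 * x2 + x3 - a * x2,
        x3 - a * x3] := by
  funext k
  fin_cases k <;>
    simp [st, A, Matrix.mulVec, dotProduct, Fin.sum_univ_four] <;> ring

private def uu0 : Fin 4 → RatFunc ℂ := ![(1 : RatFunc ℂ), 0, 0, 0]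

private def uu1 : Fin 4 → RatFunc ℂ := ![(1 : RatFunc ℂ) - W ^ 4 + W ^ 8, (1 : RatFunc ℂ) + W ^ 20, 0, 0]

private def uu2 : Fin 4 → RatFunc ℂ := ![W ^ 4, -W ^ 8 - W ^ 12, (1 : RatFunc ℂ) + (2) * W ^ 4 + W ^ 8, 0]

private def uu3 : Fin 4 → RatFunc ℂ := ![(1 : RatFunc ℂ) + W ^ 4 + W ^ 8, (1 : RatFunc ℂ) + W ^ 4 + W ^ 16 + W ^ 20, (1 : RatFunc ℂ) + (2) * W ^ 4 + W ^ 8, (1 : RatFunc ℂ) + (2) * W ^ 4 + W ^ 8 + W ^ 12 + (2) * W ^ 16 + W ^ 20]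

private lemma chain0 (x0 x1 x2 x3 : RatFunc ℂ) :
    st (-W ^ 4) (st (-W ^ 12) (st (1 : RatFunc ℂ) ![x0, x1, x2, x3])) = ((-W ^ 16 - W ^ 28 - W ^ 36 + W ^ 40 - W ^ 48 + W ^ 52 + W ^ 60 + W ^ 72) * x0 + (W ^ 16 - W ^ 20 + W ^ 24 + W ^ 28 - W ^ 32 + W ^ 36 - W ^ 40 + W ^ 44 - W ^ 48 - W ^ 52 + W ^ 56 - W ^ 60) * x1 + (W ^ 20 - W ^ 24 + W ^ 28 + W ^ 36 - W ^ 40 + W ^ 48 - W ^ 52 - W ^ 60 + W ^ 64 - W ^ 68) * x2 + (-W ^ 28 + W ^ 32 - W ^ 36 + W ^ 40 - W ^ 44 + W ^ 48) * x3) • uu0 := by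
  rw [st_apply, st_apply, st_apply]
  funext k
  fin_cases k <;> simp [uu0] <;> ring

private lemma chain1 (x0 x1 x2 x3 : RatFunc ℂ) :
    st (W ^ 24) (st (-W ^ 12) (st (1 : RatFunc ℂ) ![x0, x1, x2, x3])) = ((-W ^ 8 - W ^ 12 + W ^ 16 + W ^ 20) * x1 + (-W ^ 16 + W ^ 24) * x2 + (W ^ 8 - W ^ 20) * x3) • uu1 := by
  rw [st_apply, st_apply, st_apply]
  funext k
  fin_cases k <;> simp [uu1] <;> ring

private lemma chain2 (x0 x1 x2 x3 : RatFunc ℂ) :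
    st (W ^ 24) (st (-W ^ 4) (st (1 : RatFunc ℂ) ![x0, x1, x2, x3])) = ((W ^ 16 + (-2) * W ^ 20 + (2) * W ^ 24 + (-2) * W ^ 32 + (2) * W ^ 36 - W ^ 40) * x2 + (-W ^ 16 + (2) * W ^ 20 + (-2) * W ^ 24 + W ^ 28) * x3) • uu2 := by
  rw [st_apply, st_apply, st_apply]
  funext k
  fin_cases k <;> simp [uu2] <;> ring

private lemma chain3 (x0 x1 x2 x3 : RatFunc ℂ) :
    st (W ^ 24) (st (-W ^ 4) (st (-W ^ 12) ![x0, x1, x2, x3])) = (((1 : RatFunc ℂ) - W ^ 4 + W ^ 8 - W ^ 12 + W ^ 16 - W ^ 20) * x3) • uu3 := by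
  rw [st_apply, st_apply, st_apply]
  funext k
  fin_cases k <;> simp [uu3] <;> ring

private lemma lagrange (x0 x1 x2 x3 : RatFunc ℂ) :
    (((W ^ 4 + W ^ 24) * (W ^ 12 + W ^ 24) * ((-1 : RatFunc ℂ) + W ^ 24) * ((-W ^ 4 + W ^ 12) * ((1 : RatFunc ℂ) + W ^ 4) * ((1 : RatFunc ℂ) + W ^ 12)) ^ 2) * ((-W ^ 16 - W ^ 28 - W ^ 36 + W ^ 40 - W ^ 48 + W ^ 52 + W ^ 60 + W ^ 72) * x0 + (W ^ 16 - W ^ 20 + W ^ 24 + W ^ 28 - W ^ 32 + W ^ 36 - W ^ 40 + W ^ 44 - W ^ 48 - W ^ 52 + W ^ 56 - W ^ 60) * x1 + (W ^ 20 - W ^ 24 + W ^ 28 + W ^ 36 - W ^ 40 + W ^ 48 - W ^ 52 - W ^ 60 + W ^ 64 - W ^ 68) * x2 + (-W ^ 28 + W ^ 32 - W ^ 36 + W ^ 40 - W ^ 44 + W ^ 48) * x3)) • uu0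
      + (((W ^ 4 + W ^ 24) * (-W ^ 4 + W ^ 12) * ((1 : RatFunc ℂ) + W ^ 4) * ((W ^ 12 + W ^ 24) * ((-1 : RatFunc ℂ) + W ^ 24) * ((1 : RatFunc ℂ) + W ^ 12)) ^ 2) * ((-W ^ 8 - W ^ 12 + W ^ 16 + W ^ 20) * x1 + (-W ^ 16 + W ^ 24) * x2 + (W ^ 8 - W ^ 20) * x3)) • uu1
      + ((-((W ^ 12 + W ^ 24) * (-W ^ 4 + W ^ 12) * ((1 : RatFunc ℂ) + W ^ 12) * ((W ^ 4 + W ^ 24) * ((-1 : RatFunc ℂ) + W ^ 24) * ((1 : RatFunc ℂ) + W ^ 4)) ^ 2)) * ((W ^ 16 + (-2) * W ^ 20 + (2) * W ^ 24 + (-2) * W ^ 32 + (2) * W ^ 36 - W ^ 40) * x2 + (-W ^ 16 + (2) * W ^ 20 + (-2) * W ^ 24 + W ^ 28) * x3)) • uu2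
      + ((-(((-1 : RatFunc ℂ) + W ^ 24) * ((1 : RatFunc ℂ) + W ^ 4) * ((1 : RatFunc ℂ) + W ^ 12) * ((W ^ 4 + W ^ 24) * (W ^ 12 + W ^ 24) * (-W ^ 4 + W ^ 12)) ^ 2)) * (((1 : RatFunc ℂ) - W ^ 4 + W ^ 8 - W ^ 12 + W ^ 16 - W ^ 20) * x3)) • uu3
      = (((W ^ 4 + W ^ 24) * (W ^ 12 + W ^ 24) * ((-1 : RatFunc ℂ) + W ^ 24) * (-W ^ 4 + W ^ 12) * ((1 : RatFunc ℂ) + W ^ 4) * ((1 : RatFunc ℂ) + W ^ 12)) ^ 2) • ![x0, x1, x2, x3] := by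
  funext k
  fin_cases k <;> simp [uu0, uu1, uu2, uu3] <;> ring

private lemma hf1 : (W ^ 4 + W ^ 24) ≠ 0 := by
  have h := aevalW_ne ((Polynomial.X ^ 4 + Polynomial.X ^ 24 : Polynomial ℂ)) (by norm_num)
  have e : Polynomial.aeval W ((Polynomial.X ^ 4 + Polynomial.X ^ 24 : Polynomial ℂ)) = (W ^ 4 + W ^ 24) := by
    simp [map_ofNat]
    try ring
  rwa [e] at h

private lemma hf2 : (W ^ 12 + W ^ 24) ≠ 0 := by
  have h := aevalW_ne ((Polynomial.X ^ 12 + Polynomial.X ^ 24 : Polynomial ℂ)) (by norm_num)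
  have e : Polynomial.aeval W ((Polynomial.X ^ 12 + Polynomial.X ^ 24 : Polynomial ℂ)) = (W ^ 12 + W ^ 24) := by
    simp [map_ofNat]
    try ring
  rwa [e] at h

private lemma hf3 : ((-1 : RatFunc ℂ) + W ^ 24) ≠ 0 := by
  have h := aevalW_ne (((-1 : Polynomial ℂ) + Polynomial.X ^ 24 : Polynomial ℂ)) (by norm_num)
  have e : Polynomial.aeval W (((-1 : Polynomial ℂ) + Polynomial.X ^ 24 : Polynomial ℂ)) = ((-1 : RatFunc ℂ) + W ^ 24) := by
    simp [map_ofNat]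
    try ring
  rwa [e] at h

private lemma hf4 : (-W ^ 4 + W ^ 12) ≠ 0 := by
  have h := aevalW_ne ((-Polynomial.X ^ 4 + Polynomial.X ^ 12 : Polynomial ℂ)) (by norm_num)
  have e : Polynomial.aeval W ((-Polynomial.X ^ 4 + Polynomial.X ^ 12 : Polynomial ℂ)) = (-W ^ 4 + W ^ 12) := by
    simp [map_ofNat]
    try ring
  rwa [e] at h

private lemma hf5 : ((1 : RatFunc ℂ) + W ^ 4) ≠ 0 := by
  have h := aevalW_ne (((1 : Polynomial ℂ) + Polynomial.X ^ 4 : Polynomial ℂ)) (by norm_num)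
  have e : Polynomial.aeval W (((1 : Polynomial ℂ) + Polynomial.X ^ 4 : Polynomial ℂ)) = ((1 : RatFunc ℂ) + W ^ 4) := by
    simp [map_ofNat]
    try ring
  rwa [e] at h

private lemma hf6 : ((1 : RatFunc ℂ) + W ^ 12) ≠ 0 := by
  have h := aevalW_ne (((1 : Polynomial ℂ) + Polynomial.X ^ 12 : Polynomial ℂ)) (by norm_num)
  have e : Polynomial.aeval W (((1 : Polynomial ℂ) + Polynomial.X ^ 12 : Polynomial ℂ)) = ((1 : RatFunc ℂ) + W ^ 12) := by
    simp [map_ofNat]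
    try ring
  rwa [e] at h

private lemma hF : ((W ^ 4 + W ^ 24) * (W ^ 12 + W ^ 24) * ((-1 : RatFunc ℂ) + W ^ 24) * (-W ^ 4 + W ^ 12) * ((1 : RatFunc ℂ) + W ^ 4) * ((1 : RatFunc ℂ) + W ^ 12)) ≠ 0 :=
  mul_ne_zero (mul_ne_zero (mul_ne_zero (mul_ne_zero (mul_ne_zero hf1 hf2) hf3) hf4) hf5) hf6

private lemma Bu0 : B.mulVec uu0 = ![(1 : RatFunc ℂ), W ^ 12, (1 : RatFunc ℂ), W ^ 12] := by
  funext k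
  fin_cases k <;>
    simp [B, uu0, Matrix.mulVec, dotProduct, Fin.sum_univ_four] <;> ring

private lemma Bu1 : B.mulVec uu1 = ![(1 : RatFunc ℂ) - W ^ 4 + W ^ 8, -W ^ 16 + W ^ 20 - W ^ 32, W ^ 8 - W ^ 20 + W ^ 24, -W ^ 32 + W ^ 36 - W ^ 40] := by
  funext k
  fin_cases k <;>
    simp [B, uu1, Matrix.mulVec, dotProduct, Fin.sum_univ_four] <;> ring

private lemma Bu2 : B.mulVec uu2 = ![W ^ 4, W ^ 16 + W ^ 20 + W ^ 24, -W ^ 8 - W ^ 12 - W ^ 16, -W ^ 28] := by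
  funext k
  fin_cases k <;>
    simp [B, uu2, Matrix.mulVec, dotProduct, Fin.sum_univ_four] <;> ring

private lemma Bu3 : B.mulVec uu3 = ![(1 : RatFunc ℂ) + W ^ 4 + W ^ 8, W ^ 20 - W ^ 28 - W ^ 32, -W ^ 12 - W ^ 16 + W ^ 24, W ^ 36 + W ^ 40 + W ^ 44] := by
  funext k
  fin_cases k <;>
    simp [B, uu3, Matrix.mulVec, dotProduct, Fin.sum_univ_four] <;> ring

private lemma step10 :
    st (-W ^ 4) (st (-W ^ 12) (st (1 : RatFunc ℂ) (B.mulVec uu1))) = (-W ^ 16 + W ^ 20 - W ^ 24 - W ^ 32 + W ^ 36 - W ^ 40 + W ^ 44 + (-2) * W ^ 48 + (2) * W ^ 52 - W ^ 56 + W ^ 60 - W ^ 64 + W ^ 68 + W ^ 76 - W ^ 80 + W ^ 84) • uu0 := by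
  rw [Bu1, chain0]
  congr 1
  ring

private lemma step10_ne : (-W ^ 16 + W ^ 20 - W ^ 24 - W ^ 32 + W ^ 36 - W ^ 40 + W ^ 44 + (-2) * W ^ 48 + (2) * W ^ 52 - W ^ 56 + W ^ 60 - W ^ 64 + W ^ 68 + W ^ 76 - W ^ 80 + W ^ 84) ≠ 0 := by
  have h := aevalW_ne ((-Polynomial.X ^ 16 + Polynomial.X ^ 20 - Polynomial.X ^ 24 - Polynomial.X ^ 32 + Polynomial.X ^ 36 - Polynomial.X ^ 40 + Polynomial.X ^ 44 + (-2) * Polynomial.X ^ 48 + (2) * Polynomial.X ^ 52 - Polynomial.X ^ 56 + Polynomial.X ^ 60 - Polynomial.X ^ 64 + Polynomial.X ^ 68 + Polynomial.X ^ 76 - Polynomial.X ^ 80 + Polynomial.X ^ 84 : Polynomial ℂ)) (by norm_num)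
  have e : Polynomial.aeval W ((-Polynomial.X ^ 16 + Polynomial.X ^ 20 - Polynomial.X ^ 24 - Polynomial.X ^ 32 + Polynomial.X ^ 36 - Polynomial.X ^ 40 + Polynomial.X ^ 44 + (-2) * Polynomial.X ^ 48 + (2) * Polynomial.X ^ 52 - Polynomial.X ^ 56 + Polynomial.X ^ 60 - Polynomial.X ^ 64 + Polynomial.X ^ 68 + Polynomial.X ^ 76 - Polynomial.X ^ 80 + Polynomial.X ^ 84 : Polynomial ℂ)) = (-W ^ 16 + W ^ 20 - W ^ 24 - W ^ 32 + W ^ 36 - W ^ 40 + W ^ 44 + (-2) * W ^ 48 + (2) * W ^ 52 - W ^ 56 + W ^ 60 - W ^ 64 + W ^ 68 + W ^ 76 - W ^ 80 + W ^ 84) := by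
    simp [map_ofNat]
    try ring
  rwa [e] at h

private lemma step20 :
    st (-W ^ 4) (st (-W ^ 12) (st (1 : RatFunc ℂ) (B.mulVec uu2))) = (-W ^ 20 - W ^ 28 - W ^ 36 + W ^ 48 + W ^ 56 + W ^ 64) • uu0 := by
  rw [Bu2, chain0]
  congr 1
  ring

private lemma step20_ne : (-W ^ 20 - W ^ 28 - W ^ 36 + W ^ 48 + W ^ 56 + W ^ 64) ≠ 0 := by
  have h := aevalW_ne ((-Polynomial.X ^ 20 - Polynomial.X ^ 28 - Polynomial.X ^ 36 + Polynomial.X ^ 48 + Polynomial.X ^ 56 + Polynomial.X ^ 64 : Polynomial ℂ)) (by norm_num)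
  have e : Polynomial.aeval W ((-Polynomial.X ^ 20 - Polynomial.X ^ 28 - Polynomial.X ^ 36 + Polynomial.X ^ 48 + Polynomial.X ^ 56 + Polynomial.X ^ 64 : Polynomial ℂ)) = (-W ^ 20 - W ^ 28 - W ^ 36 + W ^ 48 + W ^ 56 + W ^ 64) := by
    simp [map_ofNat]
    try ring
  rwa [e] at h

private lemma step30 :
    st (-W ^ 4) (st (-W ^ 12) (st (1 : RatFunc ℂ) (B.mulVec uu3))) = (-W ^ 16 - W ^ 20 - W ^ 24 - W ^ 28 + (-2) * W ^ 32 - W ^ 36 - W ^ 40 - W ^ 48 + W ^ 60 + W ^ 68 + W ^ 72 + (2) * W ^ 76 + W ^ 80 + W ^ 84 + W ^ 88 + W ^ 92) • uu0 := by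
  rw [Bu3, chain0]
  congr 1
  ring

private lemma step30_ne : (-W ^ 16 - W ^ 20 - W ^ 24 - W ^ 28 + (-2) * W ^ 32 - W ^ 36 - W ^ 40 - W ^ 48 + W ^ 60 + W ^ 68 + W ^ 72 + (2) * W ^ 76 + W ^ 80 + W ^ 84 + W ^ 88 + W ^ 92) ≠ 0 := by
  have h := aevalW_ne ((-Polynomial.X ^ 16 - Polynomial.X ^ 20 - Polynomial.X ^ 24 - Polynomial.X ^ 28 + (-2) * Polynomial.X ^ 32 - Polynomial.X ^ 36 - Polynomial.X ^ 40 - Polynomial.X ^ 48 + Polynomial.X ^ 60 + Polynomial.X ^ 68 + Polynomial.X ^ 72 + (2) * Polynomial.X ^ 76 + Polynomial.X ^ 80 + Polynomial.X ^ 84 + Polynomial.X ^ 88 + Polynomial.X ^ 92 : Polynomial ℂ)) (by norm_num)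
  have e : Polynomial.aeval W ((-Polynomial.X ^ 16 - Polynomial.X ^ 20 - Polynomial.X ^ 24 - Polynomial.X ^ 28 + (-2) * Polynomial.X ^ 32 - Polynomial.X ^ 36 - Polynomial.X ^ 40 - Polynomial.X ^ 48 + Polynomial.X ^ 60 + Polynomial.X ^ 68 + Polynomial.X ^ 72 + (2) * Polynomial.X ^ 76 + Polynomial.X ^ 80 + Polynomial.X ^ 84 + Polynomial.X ^ 88 + Polynomial.X ^ 92 : Polynomial ℂ)) = (-W ^ 16 - W ^ 20 - W ^ 24 - W ^ 28 + (-2) * W ^ 32 - W ^ 36 - W ^ 40 - W ^ 48 + W ^ 60 + W ^ 68 + W ^ 72 + (2) * W ^ 76 + W ^ 80 + W ^ 84 + W ^ 88 + W ^ 92) := by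
    simp [map_ofNat]
    try ring
  rwa [e] at h

private lemma step01 :
    st (W ^ 24) (st (-W ^ 12) (st (1 : RatFunc ℂ) (B.mulVec uu0))) = (-W ^ 16 + W ^ 28) • uu1 := by
  rw [Bu0, chain1]
  congr 1
  ring

private lemma step01_ne : (-W ^ 16 + W ^ 28) ≠ 0 := by
  have h := aevalW_ne ((-Polynomial.X ^ 16 + Polynomial.X ^ 28 : Polynomial ℂ)) (by norm_num)
  have e : Polynomial.aeval W ((-Polynomial.X ^ 16 + Polynomial.X ^ 28 : Polynomial ℂ)) = (-W ^ 16 + W ^ 28) := by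
    simp [map_ofNat]
    try ring
  rwa [e] at h

private lemma step02 :
    st (W ^ 24) (st (-W ^ 4) (st (1 : RatFunc ℂ) (B.mulVec uu0))) = (W ^ 16 + (-2) * W ^ 20 + (2) * W ^ 24 - W ^ 28) • uu2 := by
  rw [Bu0, chain2]
  congr 1
  ring

private lemma step02_ne : (W ^ 16 + (-2) * W ^ 20 + (2) * W ^ 24 - W ^ 28) ≠ 0 := by
  have h := aevalW_ne ((Polynomial.X ^ 16 + (-2) * Polynomial.X ^ 20 + (2) * Polynomial.X ^ 24 - Polynomial.X ^ 28 : Polynomial ℂ)) (by norm_num)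
  have e : Polynomial.aeval W ((Polynomial.X ^ 16 + (-2) * Polynomial.X ^ 20 + (2) * Polynomial.X ^ 24 - Polynomial.X ^ 28 : Polynomial ℂ)) = (W ^ 16 + (-2) * W ^ 20 + (2) * W ^ 24 - W ^ 28) := by
    simp [map_ofNat]
    try ring
  rwa [e] at h

private lemma step03 :
    st (W ^ 24) (st (-W ^ 4) (st (-W ^ 12) (B.mulVec uu0))) = (W ^ 12 - W ^ 16 + W ^ 20 - W ^ 24 + W ^ 28 - W ^ 32) • uu3 := by
  rw [Bu0, chain3]
  congr 1
  ring

private lemma step03_ne : (W ^ 12 - W ^ 16 + W ^ 20 - W ^ 24 + W ^ 28 - W ^ 32) ≠ 0 := by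
  have h := aevalW_ne ((Polynomial.X ^ 12 - Polynomial.X ^ 16 + Polynomial.X ^ 20 - Polynomial.X ^ 24 + Polynomial.X ^ 28 - Polynomial.X ^ 32 : Polynomial ℂ)) (by norm_num)
  have e : Polynomial.aeval W ((Polynomial.X ^ 12 - Polynomial.X ^ 16 + Polynomial.X ^ 20 - Polynomial.X ^ 24 + Polynomial.X ^ 28 - Polynomial.X ^ 32 : Polynomial ℂ)) = (W ^ 12 - W ^ 16 + W ^ 20 - W ^ 24 + W ^ 28 - W ^ 32) := by
    simp [map_ofNat]
    try ring
  rwa [e] at h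

private lemma span0 :
    ((1 : RatFunc ℂ) + (4) * W ^ 4 + (6) * W ^ 8 + (5) * W ^ 12 + (5) * W ^ 16 + (7) * W ^ 20 + (8) * W ^ 24 + (7) * W ^ 28 + (5) * W ^ 32 + (5) * W ^ 36 + (6) * W ^ 40 + (4) * W ^ 44 + W ^ 48) • uu0 = ((1 : RatFunc ℂ) + (4) * W ^ 4 + (6) * W ^ 8 + (5) * W ^ 12 + (5) * W ^ 16 + (7) * W ^ 20 + (8) * W ^ 24 + (7) * W ^ 28 + (5) * W ^ 32 + (5) * W ^ 36 + (6) * W ^ 40 + (4) * W ^ 44 + W ^ 48) • (![(1 : RatFunc ℂ), 0, 0, 0] : Fin 4 → RatFunc ℂ) := by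
  funext j
  fin_cases j <;> simp [uu0, uu1, uu2, uu3] <;> ring

private lemma span1 :
    ((-1 : RatFunc ℂ) + (-3) * W ^ 4 + (-3) * W ^ 8 + (-3) * W ^ 12 + (-6) * W ^ 16 + (-6) * W ^ 20 + (-3) * W ^ 24 + (-3) * W ^ 28 + (-3) * W ^ 32 - W ^ 36) • uu0 + ((1 : RatFunc ℂ) + (4) * W ^ 4 + (6) * W ^ 8 + (5) * W ^ 12 + (5) * W ^ 16 + (6) * W ^ 20 + (4) * W ^ 24 + W ^ 28) • uu1 = ((1 : RatFunc ℂ) + (4) * W ^ 4 + (6) * W ^ 8 + (5) * W ^ 12 + (5) * W ^ 16 + (7) * W ^ 20 + (8) * W ^ 24 + (7) * W ^ 28 + (5) * W ^ 32 + (5) * W ^ 36 + (6) * W ^ 40 + (4) * W ^ 44 + W ^ 48) • (![0, (1 : RatFunc ℂ), 0, 0] : Fin 4 → RatFunc ℂ) := by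
  funext j
  fin_cases j <;> simp [uu0, uu1, uu2, uu3] <;> ring

private lemma span2 :
    (-W ^ 4 + (-3) * W ^ 8 + (-3) * W ^ 12 + (-2) * W ^ 16 + (-4) * W ^ 20 + (-6) * W ^ 24 + (-4) * W ^ 28 + (-2) * W ^ 32 + (-3) * W ^ 36 + (-3) * W ^ 40 - W ^ 44) • uu0 + (W ^ 8 + (3) * W ^ 12 + (3) * W ^ 16 + (2) * W ^ 20 + (3) * W ^ 24 + (3) * W ^ 28 + W ^ 32) • uu1 + ((1 : RatFunc ℂ) + (2) * W ^ 4 + W ^ 8 + W ^ 12 + (2) * W ^ 16 + (2) * W ^ 20 + (2) * W ^ 24 + W ^ 28 + W ^ 32 + (2) * W ^ 36 + W ^ 40) • uu2 = ((1 : RatFunc ℂ) + (4) * W ^ 4 + (6) * W ^ 8 + (5) * W ^ 12 + (5) * W ^ 16 + (7) * W ^ 20 + (8) * W ^ 24 + (7) * W ^ 28 + (5) * W ^ 32 + (5) * W ^ 36 + (6) * W ^ 40 + (4) * W ^ 44 + W ^ 48) • (![0, 0, (1 : RatFunc ℂ), 0] : Fin 4 → RatFunc ℂ) := by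
  funext j
  fin_cases j <;> simp [uu0, uu1, uu2, uu3] <;> ring

private lemma span3 :
    (W ^ 12 + (3) * W ^ 16 + (3) * W ^ 20 + W ^ 24) • uu0 + ((-1 : RatFunc ℂ) + (-3) * W ^ 4 + (-4) * W ^ 8 + (-4) * W ^ 12 + (-4) * W ^ 16 + (-4) * W ^ 20 + (-3) * W ^ 24 - W ^ 28) • uu1 + ((-1 : RatFunc ℂ) + (-2) * W ^ 4 - W ^ 8 - W ^ 20 + (-2) * W ^ 24 - W ^ 28) • uu2 + ((1 : RatFunc ℂ) + (2) * W ^ 4 + W ^ 8 + W ^ 20 + (2) * W ^ 24 + W ^ 28) • uu3 = ((1 : RatFunc ℂ) + (4) * W ^ 4 + (6) * W ^ 8 + (5) * W ^ 12 + (5) * W ^ 16 + (7) * W ^ 20 + (8) * W ^ 24 + (7) * W ^ 28 + (5) * W ^ 32 + (5) * W ^ 36 + (6) * W ^ 40 + (4) * W ^ 44 + W ^ 48) • (![0, 0, 0, (1 : RatFunc ℂ)] : Fin 4 → RatFunc ℂ) := by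
  funext j
  fin_cases j <;> simp [uu0, uu1, uu2, uu3] <;> ring

private lemma hdU : ((1 : RatFunc ℂ) + (4) * W ^ 4 + (6) * W ^ 8 + (5) * W ^ 12 + (5) * W ^ 16 + (7) * W ^ 20 + (8) * W ^ 24 + (7) * W ^ 28 + (5) * W ^ 32 + (5) * W ^ 36 + (6) * W ^ 40 + (4) * W ^ 44 + W ^ 48) ≠ 0 := by
  have h := aevalW_ne (((1 : Polynomial ℂ) + (4) * Polynomial.X ^ 4 + (6) * Polynomial.X ^ 8 + (5) * Polynomial.X ^ 12 + (5) * Polynomial.X ^ 16 + (7) * Polynomial.X ^ 20 + (8) * Polynomial.X ^ 24 + (7) * Polynomial.X ^ 28 + (5) * Polynomial.X ^ 32 + (5) * Polynomial.X ^ 36 + (6) * Polynomial.X ^ 40 + (4) * Polynomial.X ^ 44 + Polynomial.X ^ 48 : Polynomial ℂ)) (by norm_num)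
  have e : Polynomial.aeval W (((1 : Polynomial ℂ) + (4) * Polynomial.X ^ 4 + (6) * Polynomial.X ^ 8 + (5) * Polynomial.X ^ 12 + (5) * Polynomial.X ^ 16 + (7) * Polynomial.X ^ 20 + (8) * Polynomial.X ^ 24 + (7) * Polynomial.X ^ 28 + (5) * Polynomial.X ^ 32 + (5) * Polynomial.X ^ 36 + (6) * Polynomial.X ^ 40 + (4) * Polynomial.X ^ 44 + Polynomial.X ^ 48 : Polynomial ℂ)) = ((1 : RatFunc ℂ) + (4) * W ^ 4 + (6) * W ^ 8 + (5) * W ^ 12 + (5) * W ^ 16 + (7) * W ^ 20 + (8) * W ^ 24 + (7) * W ^ 28 + (5) * W ^ 32 + (5) * W ^ 36 + (6) * W ^ 40 + (4) * W ^ 44 + W ^ 48) := by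
    simp [map_ofNat]
    try ring
  rwa [e] at h

/-- The 4-dimensional representation `ζ₄` of the braid group `B₃` is simple: every
`K`-linear subspace of `K⁴` invariant under `R₄` and `Q₄` is `⊥` or `⊤`. -/
theorem Zspin7_zeta4_simple :
    ∀ V : Submodule (RatFunc ℂ) (Fin 4 → RatFunc ℂ),
      (∀ v ∈ V, R4.mulVec v ∈ V) → (∀ v ∈ V, Q4.mulVec v ∈ V) →
      V = ⊥ ∨ V = ⊤ := by
  intro V hR hQ
  by_cases hbot : V = ⊥
  · exact Or.inl hbot
  right
  obtain ⟨v, hvV, hv0⟩ := Submodule.ne_bot_iff V |>.mp hbot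
  -- invariance under A and B
  have hA : ∀ w ∈ V, A.mulVec w ∈ V := by
    intro w hw
    rw [A_mulVec w]
    exact V.smul_mem _ (hR w hw)
  have hB : ∀ w ∈ V, B.mulVec w ∈ V := by
    intro w hw
    rw [B_mulVec w]
    exact V.smul_mem _ (hQ w hw)
  have hst : ∀ (a : RatFunc ℂ) w, w ∈ V → st a w ∈ V := by
    intro a w hw
    exact V.sub_mem (hA w hw) (V.smul_mem a hw)
  have hst3 : ∀ (a b c : RatFunc ℂ) w, w ∈ V → st a (st b (st c w)) ∈ V := by
    intro a b c w hw
    exact hst _ _ (hst _ _ (hst _ _ hw))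
  have hv4 : v = ![v 0, v 1, v 2, v 3] := by
    funext k; fin_cases k <;> rfl
  -- membership of (g_i v) • uu_i
  have hm0 : (((-W ^ 16 - W ^ 28 - W ^ 36 + W ^ 40 - W ^ 48 + W ^ 52 + W ^ 60 + W ^ 72) * v 0 + (W ^ 16 - W ^ 20 + W ^ 24 + W ^ 28 - W ^ 32 + W ^ 36 - W ^ 40 + W ^ 44 - W ^ 48 - W ^ 52 + W ^ 56 - W ^ 60) * v 1 + (W ^ 20 - W ^ 24 + W ^ 28 + W ^ 36 - W ^ 40 + W ^ 48 - W ^ 52 - W ^ 60 + W ^ 64 - W ^ 68) * v 2 + (-W ^ 28 + W ^ 32 - W ^ 36 + W ^ 40 - W ^ 44 + W ^ 48) * v 3)) • uu0 ∈ V := by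
    have h := hst3 (-W ^ 4) (-W ^ 12) (1 : RatFunc ℂ) v hvV
    rwa [hv4, chain0] at h
  have hm1 : (((-W ^ 8 - W ^ 12 + W ^ 16 + W ^ 20) * v 1 + (-W ^ 16 + W ^ 24) * v 2 + (W ^ 8 - W ^ 20) * v 3)) • uu1 ∈ V := by
    have h := hst3 (W ^ 24) (-W ^ 12) (1 : RatFunc ℂ) v hvV
    rwa [hv4, chain1] at h
  have hm2 : (((W ^ 16 + (-2) * W ^ 20 + (2) * W ^ 24 + (-2) * W ^ 32 + (2) * W ^ 36 - W ^ 40) * v 2 + (-W ^ 16 + (2) * W ^ 20 + (-2) * W ^ 24 + W ^ 28) * v 3)) • uu2 ∈ V := by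
    have h := hst3 (W ^ 24) (-W ^ 4) (1 : RatFunc ℂ) v hvV
    rwa [hv4, chain2] at h
  have hm3 : ((((1 : RatFunc ℂ) - W ^ 4 + W ^ 8 - W ^ 12 + W ^ 16 - W ^ 20) * v 3)) • uu3 ∈ V := by
    have h := hst3 (W ^ 24) (-W ^ 4) (-W ^ 12) v hvV
    rwa [hv4, chain3] at h
  -- helper to extract an eigenvector
  have extract : ∀ (c : RatFunc ℂ) (u : Fin 4 → RatFunc ℂ), c ≠ 0 → c • u ∈ V → u ∈ V := by
    intro c u hc hcu
    have h := V.smul_mem c⁻¹ hcu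
    rwa [inv_smul_smul₀ hc] at h
  -- get uu0 ∈ V
  have hu_some : uu1 ∈ V ∨ uu2 ∈ V ∨ uu3 ∈ V ∨ uu0 ∈ V := by
    by_cases h0 : (((-W ^ 16 - W ^ 28 - W ^ 36 + W ^ 40 - W ^ 48 + W ^ 52 + W ^ 60 + W ^ 72) * v 0 + (W ^ 16 - W ^ 20 + W ^ 24 + W ^ 28 - W ^ 32 + W ^ 36 - W ^ 40 + W ^ 44 - W ^ 48 - W ^ 52 + W ^ 56 - W ^ 60) * v 1 + (W ^ 20 - W ^ 24 + W ^ 28 + W ^ 36 - W ^ 40 + W ^ 48 - W ^ 52 - W ^ 60 + W ^ 64 - W ^ 68) * v 2 + (-W ^ 28 + W ^ 32 - W ^ 36 + W ^ 40 - W ^ 44 + W ^ 48) * v 3)) = 0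
    · by_cases h1 : (((-W ^ 8 - W ^ 12 + W ^ 16 + W ^ 20) * v 1 + (-W ^ 16 + W ^ 24) * v 2 + (W ^ 8 - W ^ 20) * v 3)) = 0
      · by_cases h2 : (((W ^ 16 + (-2) * W ^ 20 + (2) * W ^ 24 + (-2) * W ^ 32 + (2) * W ^ 36 - W ^ 40) * v 2 + (-W ^ 16 + (2) * W ^ 20 + (-2) * W ^ 24 + W ^ 28) * v 3)) = 0
        · by_cases h3 : ((((1 : RatFunc ℂ) - W ^ 4 + W ^ 8 - W ^ 12 + W ^ 16 - W ^ 20) * v 3)) = 0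
          · exfalso
            apply hv0
            have hl := lagrange (v 0) (v 1) (v 2) (v 3)
            rw [h0, h1, h2, h3] at hl
            simp only [mul_zero, zero_smul, add_zero, zero_add] at hl
            have hF2 : (((W ^ 4 + W ^ 24) * (W ^ 12 + W ^ 24) * ((-1 : RatFunc ℂ) + W ^ 24) * (-W ^ 4 + W ^ 12) * ((1 : RatFunc ℂ) + W ^ 4) * ((1 : RatFunc ℂ) + W ^ 12)) : RatFunc ℂ) ^ 2 ≠ 0 := pow_ne_zero 2 hF
            have := (smul_eq_zero.mp hl.symm).resolve_left hF2
            rw [hv4, this]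
          · exact Or.inr (Or.inr (Or.inl (extract _ _ h3 hm3)))
        · exact Or.inr (Or.inl (extract _ _ h2 hm2))
      · exact Or.inl (extract _ _ h1 hm1)
    · exact Or.inr (Or.inr (Or.inr (extract _ _ h0 hm0)))
  have hu0 : uu0 ∈ V := by
    rcases hu_some with h | h | h | h
    · refine extract _ _ step10_ne ?_
      rw [← step10]
      exact hst3 _ _ _ _ (hB _ h)
    · refine extract _ _ step20_ne ?_
      rw [← step20]
      exact hst3 _ _ _ _ (hB _ h)
    · refine extract _ _ step30_ne ?_
      rw [← step30]
      exact hst3 _ _ _ _ (hB _ h)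
    · exact h
  have hu1 : uu1 ∈ V := by
    refine extract _ _ step01_ne ?_
    rw [← step01]
    exact hst3 _ _ _ _ (hB _ hu0)
  have hu2 : uu2 ∈ V := by
    refine extract _ _ step02_ne ?_
    rw [← step02]
    exact hst3 _ _ _ _ (hB _ hu0)
  have hu3 : uu3 ∈ V := by
    refine extract _ _ step03_ne ?_
    rw [← step03]
    exact hst3 _ _ _ _ (hB _ hu0)

  -- standard basis vectors
  have hscale : ∀ x : Fin 4 → RatFunc ℂ, (((1 : RatFunc ℂ) + (4) * W ^ 4 + (6) * W ^ 8 + (5) * W ^ 12 + (5) * W ^ 16 + (7) * W ^ 20 + (8) * W ^ 24 + (7) * W ^ 28 + (5) * W ^ 32 + (5) * W ^ 36 + (6) * W ^ 40 + (4) * W ^ 44 + W ^ 48) : RatFunc ℂ) • x ∈ V → x ∈ V := by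
    intro x hx
    have h := V.smul_mem (((1 : RatFunc ℂ) + (4) * W ^ 4 + (6) * W ^ 8 + (5) * W ^ 12 + (5) * W ^ 16 + (7) * W ^ 20 + (8) * W ^ 24 + (7) * W ^ 28 + (5) * W ^ 32 + (5) * W ^ 36 + (6) * W ^ 40 + (4) * W ^ 44 + W ^ 48) : RatFunc ℂ)⁻¹ hx
    rwa [inv_smul_smul₀ hdU] at h
  have he0 : (![(1 : RatFunc ℂ), 0, 0, 0] : Fin 4 → RatFunc ℂ) ∈ V := by
    apply hscale
    rw [← span0]
    exact V.smul_mem _ hu0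
  have he1 : (![0, (1 : RatFunc ℂ), 0, 0] : Fin 4 → RatFunc ℂ) ∈ V := by
    apply hscale
    rw [← span1]
    exact V.add_mem (V.smul_mem _ hu0) (V.smul_mem _ hu1)
  have he2 : (![0, 0, (1 : RatFunc ℂ), 0] : Fin 4 → RatFunc ℂ) ∈ V := by
    apply hscale
    rw [← span2]
    exact V.add_mem (V.add_mem (V.smul_mem _ hu0) (V.smul_mem _ hu1)) (V.smul_mem _ hu2)
  have he3 : (![0, 0, 0, (1 : RatFunc ℂ)] : Fin 4 → RatFunc ℂ) ∈ V := by
    apply hscale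
    rw [← span3]
    exact V.add_mem (V.add_mem (V.add_mem (V.smul_mem _ hu0) (V.smul_mem _ hu1)) (V.smul_mem _ hu2)) (V.smul_mem _ hu3)
  rw [eq_top_iff]
  rintro x -
  have hx : x = x 0 • (![(1 : RatFunc ℂ), 0, 0, 0] : Fin 4 → RatFunc ℂ)
      + x 1 • (![0, (1 : RatFunc ℂ), 0, 0] : Fin 4 → RatFunc ℂ)
      + x 2 • (![0, 0, (1 : RatFunc ℂ), 0] : Fin 4 → RatFunc ℂ)
      + x 3 • (![0, 0, 0, (1 : RatFunc ℂ)] : Fin 4 → RatFunc ℂ) := by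
    funext j
    fin_cases j <;> simp
  rw [hx]
  exact V.add_mem (V.add_mem (V.add_mem (V.smul_mem _ he0) (V.smul_mem _ he1)) (V.smul_mem _ he2)) (V.smul_mem _ he3)

end
end

section
/- The 2-dimensional representation ζ₂ of the braid group B₃ is simple: every K-linear subspace V of K² satisfying R₂·v ∈ V and Q₂·v ∈ V for all v ∈ V is either the zero subspace or all of K². -/
noncomputable section

set_option maxHeartbeats 1000000
set_option synthInstance.maxHeartbeats 200000

/-- `R₂`: the 2×2 block of the image of the elementary braid `σ₁` of `B₃` under the
invariant `Z_spin7` obtained from the universal Vassiliev–Kontsevich invariant composed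
with the weight system of the spinor representation of `so₇`. -/
def R2 : Matrix (Fin 2) (Fin 2) (RatFunc ℂ) :=
  !![-W, -W; 0, W ^ (-3 : ℤ)]

/-- `Q₂`: the 2×2 block of the image of the elementary braid `σ₂` of `B₃` under
`Z_spin7`. -/
def Q2 : Matrix (Fin 2) (Fin 2) (RatFunc ℂ) :=
  !![W ^ (-3 : ℤ), 0; -W ^ (-3 : ℤ), -W]

namespace Zspin7Aux

abbrev K := RatFunc ℂ

lemma hW0 : W ≠ 0 := RatFunc.X_ne_zero

lemma key_poly : (W : K) ^ 8 + W ^ 4 + 1 ≠ 0 := by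
  have hp : ((Polynomial.X : Polynomial ℂ) ^ 8 + Polynomial.X ^ 4 + 1) ≠ 0 := by
    intro h
    have := congrArg (fun p => Polynomial.coeff p 0) h
    simp [Polynomial.coeff_X_pow] at this
  have h2 := RatFunc.algebraMap_ne_zero hp
  simpa [map_add, map_pow, W] using h2

lemma hz3 : W ^ (-3 : ℤ) = (W ^ 3)⁻¹ := by
  rw [← zpow_natCast W 3, ← zpow_neg]
  norm_num

lemma mulVec_eq (a b c d x y : K) :
    (!![a, b; c, d]).mulVec ![x, y] = ![a * x + b * y, c * x + d * y] := by
  funext i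
  fin_cases i <;>
    simp [Matrix.mulVec, dotProduct, Fin.sum_univ_two]

lemma smul2 (c x y : K) : c • (![x, y] : Fin 2 → K) = ![c * x, c * y] := by
  funext i; fin_cases i <;> simp

lemma sub2 (x y z w : K) :
    (![x, y] : Fin 2 → K) - ![z, w] = ![x - z, y - w] := by
  funext i; fin_cases i <;> simp

lemma add2 (x y z w : K) :
    (![x, y] : Fin 2 → K) + ![z, w] = ![x + z, y + w] := by
  funext i; fin_cases i <;> simp

lemma eta2 (v : Fin 2 → K) : v = ![v 0, v 1] := by
  funext i; fin_cases i <;> rfl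

end Zspin7Aux

open Zspin7Aux

/-- The 2-dimensional representation `ζ₂` of the braid group `B₃` is simple: every
`K`-linear subspace of `K²` invariant under `R₂` and `Q₂` is `⊥` or `⊤`. -/
theorem Zspin7_zeta2_simple :
    ∀ V : Submodule (RatFunc ℂ) (Fin 2 → RatFunc ℂ),
      (∀ v ∈ V, R2.mulVec v ∈ V) → (∀ v ∈ V, Q2.mulVec v ∈ V) →
      V = ⊥ ∨ V = ⊤ := by
  intro V hR hQ
  by_cases hV : V = ⊥
  · exact Or.inl hV
  right
  obtain ⟨v, hvV, hv0⟩ := V.ne_bot_iff.mp hV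
  set a := v 0 with ha
  set b := v 1 with hb
  have hveq : v = ![a, b] := eta2 v
  have hW3 : (W : K) ^ 3 ≠ 0 := pow_ne_zero _ hW0
  -- if both unit vectors are in V, V = ⊤
  have htop : (![1, 0] : Fin 2 → K) ∈ V → (![0, 1] : Fin 2 → K) ∈ V → V = ⊤ := by
    intro h0 h1
    rw [Submodule.eq_top_iff']
    intro x
    have hx : x = x 0 • (![1, 0] : Fin 2 → K) + x 1 • (![0, 1] : Fin 2 → K) := by
      rw [smul2, smul2, add2]
      conv_lhs => rw [eta2 x]
      congr 1 <;> ring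
    rw [hx]
    exact V.add_mem (V.smul_mem _ h0) (V.smul_mem _ h1)
  -- e0 ∈ V → e1 ∈ V
  have he01 : (![1, 0] : Fin 2 → K) ∈ V → (![0, 1] : Fin 2 → K) ∈ V := by
    intro h0
    have h2 : Q2.mulVec ![1, 0] - W ^ (-3 : ℤ) • (![1, 0] : Fin 2 → K) ∈ V :=
      V.sub_mem (hQ _ h0) (V.smul_mem _ h0)
    have h3 := V.smul_mem (-(W ^ 3)) h2
    have heq : (-(W ^ 3)) • (Q2.mulVec ![1, 0] - W ^ (-3 : ℤ) • (![1, 0] : Fin 2 → K))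
        = (![0, 1] : Fin 2 → K) := by
      rw [Q2, mulVec_eq, smul2, sub2, smul2, hz3]
      funext i; fin_cases i <;> simp [hz3, div_self hW0] <;> try field_simp [hW0]
    rwa [heq] at h3
  -- e1 ∈ V → e0 ∈ V
  have he10 : (![0, 1] : Fin 2 → K) ∈ V → (![1, 0] : Fin 2 → K) ∈ V := by
    intro h1
    have h2 : R2.mulVec ![0, 1] - W ^ (-3 : ℤ) • (![0, 1] : Fin 2 → K) ∈ V :=
      V.sub_mem (hR _ h1) (V.smul_mem _ h1)
    have h3 := V.smul_mem (-W⁻¹) h2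
    have heq : (-W⁻¹) • (R2.mulVec ![0, 1] - W ^ (-3 : ℤ) • (![0, 1] : Fin 2 → K))
        = (![1, 0] : Fin 2 → K) := by
      rw [R2, mulVec_eq, smul2, sub2, smul2, hz3]
      funext i; fin_cases i <;> simp [hz3, div_self hW0] <;> try field_simp [hW0]
    rwa [heq] at h3
  -- main invariant vectors
  set α : K := (-W) * a + (-W) * b - (W ^ 3)⁻¹ * a with hαdef
  set β : K := (-(W ^ 3)⁻¹) * a + (-W) * b - (W ^ 3)⁻¹ * b with hβdef
  have hrv : (![α, 0] : Fin 2 → K) ∈ V := by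
    have h2 : R2.mulVec v - W ^ (-3 : ℤ) • v ∈ V := V.sub_mem (hR v hvV) (V.smul_mem _ hvV)
    have heq : R2.mulVec v - W ^ (-3 : ℤ) • v = ![α, 0] := by
      conv_lhs => rw [hveq]
      rw [R2, mulVec_eq, smul2, sub2, hz3]
      funext i; fin_cases i <;> simp [hz3] <;> try ring
    rwa [heq] at h2
  have hqv : (![0, β] : Fin 2 → K) ∈ V := by
    have h2 : Q2.mulVec v - W ^ (-3 : ℤ) • v ∈ V := V.sub_mem (hQ v hvV) (V.smul_mem _ hvV)
    have heq : Q2.mulVec v - W ^ (-3 : ℤ) • v = ![0, β] := by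
      conv_lhs => rw [hveq]
      rw [Q2, mulVec_eq, smul2, sub2, hz3]
      funext i; fin_cases i <;> simp [hz3] <;> try ring
    rwa [heq] at h2
  by_cases hα0 : α = 0
  · by_cases hβ0 : β = 0
    · exfalso
      rw [hαdef] at hα0
      rw [hβdef] at hβ0
      have hA : (-(W ^ 4) - 1) * a - W ^ 4 * b = 0 := by
        have h := congrArg (fun x => x * W ^ 3) hα0
        field_simp [hW0] at h
        linear_combination h
      have hB : -a - (W ^ 4 + 1) * b = 0 := by
        have h := congrArg (fun x => x * W ^ 3) hβ0
        field_simp [hW0] at h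
        linear_combination h
      have ha0 : a = 0 := by
        have hcomb : (W ^ 8 + W ^ 4 + 1) * a = 0 := by
          linear_combination (-(W ^ 4) - 1) * hA + W ^ 4 * hB
        rcases mul_eq_zero.mp hcomb with h | h
        · exact absurd h key_poly
        · exact h
      have hb0 : b = 0 := by
        have hcomb : (W ^ 8 + W ^ 4 + 1) * b = 0 := by
          linear_combination hA - (W ^ 4 + 1) * hB
        rcases mul_eq_zero.mp hcomb with h | h
        · exact absurd h key_poly
        · exact h
      apply hv0
      rw [hveq, ha0, hb0]
      funext i; fin_cases i <;> simp
    · have h1 : (![0, 1] : Fin 2 → K) ∈ V := by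
        have h := V.smul_mem β⁻¹ hqv
        rw [smul2] at h
        have heq : (![β⁻¹ * 0, β⁻¹ * β] : Fin 2 → K) = ![0, 1] := by
          rw [mul_zero, inv_mul_cancel₀ hβ0]
        rwa [heq] at h
      exact htop (he10 h1) h1
  · have h0 : (![1, 0] : Fin 2 → K) ∈ V := by
      have h := V.smul_mem α⁻¹ hrv
      rw [smul2] at h
      have heq : (![α⁻¹ * α, α⁻¹ * 0] : Fin 2 → K) = ![1, 0] := by
        rw [mul_zero, inv_mul_cancel₀ hα0]
      rwa [heq] at h
    exact htop h0 (he01 h0)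

end
end

section
/- The matrix M₄ satisfies M₄² = 1, and no coordinate subspace is invariant under M₄: for every subset J of {1,2,3,4} with ∅ ⊊ J ⊊ {1,2,3,4}, there exist i ∈ J and j ∉ J with (M₄)_{j,i} ≠ 0 (so that the span of the standard basis vectors e_i, i ∈ J, is not M₄-invariant). (This is the degree-0 part of ζ₄(σ₂) in the eigenbasis of ζ₄(σ₁), and is the key step in proving that the representation ζ₄ of B₃ is simple.) -/
/-- `M₄ = (1/8)·[[1,9,3,-15],[3,-5,1,-5],[7,7,1,35],[-1,-1,1,3]]`: the reduction
modulo `α` of the image of `σ₂` under the 4-dimensional representation `ζ₄` coming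
from the invariant `Z_spin7` associated with the spinor representation of `so₇`,
written in a basis in which the image of `σ₁` is diagonal with pairwise distinct
eigenvalues. -/
def M4 : Matrix (Fin 4) (Fin 4) ℚ :=
  (1 / 8 : ℚ) • !![1, 9, 3, -15; 3, -5, 1, -5; 7, 7, 1, 35; -1, -1, 1, 3]

lemma M4_eq : M4 = !![1/8, 9/8, 3/8, -15/8; 3/8, -5/8, 1/8, -5/8;
    7/8, 7/8, 1/8, 35/8; -1/8, -1/8, 1/8, 3/8] := by
  ext i j
  fin_cases i <;> fin_cases j <;> norm_num [M4]

lemma M4_entries_ne_zero : ∀ i j : Fin 4, M4 j i ≠ 0 := by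
  intro i j
  fin_cases i <;> fin_cases j <;> norm_num [M4]

/-- `M₄` is an involution and no nontrivial coordinate subspace is invariant under
`M₄`: for every `J` with `∅ ⊊ J ⊊ {1,2,3,4}`, some entry `(M₄)_{j,i}` with `i ∈ J`,
`j ∉ J` is nonzero (the key step in proving that the representation `ζ₄` of `B₃` is
simple). -/
theorem Zspin7_zeta4_degree_zero_no_invariant_coordinate_subspace :
    M4 ^ 2 = 1 ∧
    ∀ J : Finset (Fin 4), J.Nonempty → J ≠ Finset.univ →
      ∃ i ∈ J, ∃ j, j ∉ J ∧ M4 j i ≠ 0 := by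
  constructor
  · rw [pow_two, M4_eq]
    ext i j
    fin_cases i <;> fin_cases j <;>
      simp [Matrix.mul_apply, Fin.sum_univ_four, Matrix.cons_val_two,
        Matrix.cons_val_three, Matrix.vecHead, Matrix.vecTail, Matrix.one_apply] <;>
      norm_num
  · intro J hne hne'
    obtain ⟨i, hi⟩ := hne
    obtain ⟨j, hj⟩ : ∃ j, j ∉ J := by
      by_contra h
      push_neg at h
      exact hne' (Finset.eq_univ_iff_forall.mpr h)
    exact ⟨i, hi, j, hj, M4_entries_ne_zero i j⟩
end

section
/- The matrix M₃ satisfies M₃² = 1, and no coordinate subspace is invariant under M₃: for every subset J of {1,2,3} with ∅ ⊊ J ⊊ {1,2,3}, there exist i ∈ J and j ∉ J with (M₃)_{j,i} ≠ 0 (so that the span of the standard basis vectors e_i, i ∈ J, is not M₃-invariant). (This is the degree-0 part of ζ₃(σ₂) in the eigenbasis of ζ₃(σ₁), and is the key step in proving that the representation ζ₃ of B₃ is simple.) -/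
/-- `M₃ = (1/4)·[[-2,-2,10],[-1,-3,-5],[1,-1,1]]`: the reduction modulo `α` of the
image of `σ₂` under the 3-dimensional representation `ζ₃` coming from the invariant
`Z_spin7` associated with the spinor representation of `so₇`, written in a basis in
which the image of `σ₁` is diagonal with pairwise distinct eigenvalues. -/
def M3 : Matrix (Fin 3) (Fin 3) ℚ :=
  (1 / 4 : ℚ) • !![-2, -2, 10; -1, -3, -5; 1, -1, 1]

lemma M3_entries_ne (j i : Fin 3) : M3 j i ≠ 0 := by
  fin_cases j <;> fin_cases i <;>
    simp [M3, Matrix.smul_apply] <;> norm_num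

/-- `M₃` is an involution and no nontrivial coordinate subspace is invariant under
`M₃`: for every `J` with `∅ ⊊ J ⊊ {1,2,3}`, some entry `(M₃)_{j,i}` with `i ∈ J`,
`j ∉ J` is nonzero (the key step in proving that the representation `ζ₃` of `B₃` is
simple). -/
theorem Zspin7_zeta3_degree_zero_no_invariant_coordinate_subspace :
    M3 ^ 2 = 1 ∧
    ∀ J : Finset (Fin 3), J.Nonempty → J ≠ Finset.univ →
      ∃ i ∈ J, ∃ j, j ∉ J ∧ M3 j i ≠ 0 := by
  constructor
  · rw [pow_two]
    show M3 * M3 = 1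
    simp only [M3]
    norm_num [Matrix.smul_mul, Matrix.mul_smul, Matrix.mul_fin_three,
      Matrix.one_fin_three, Matrix.smul_of]
    ext i j <;> fin_cases i <;> fin_cases j <;> simp [Matrix.one_apply, Matrix.vecHead, Matrix.vecTail] <;> norm_num
  · intro J ⟨i, hi⟩ hne
    refine ⟨i, hi, ?_⟩
    have : ∃ j, j ∉ J := by
      by_contra h
      push_neg at h
      exact hne (Finset.eq_univ_iff_forall.mpr h)
    obtain ⟨j, hj⟩ := this
    exact ⟨j, hj, M3_entries_ne j i⟩
end
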